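/- Let C be a preadditive category with a zero object, and let X : Δ → C be a 1-Segal cosimplicial object such that X([0]) is a zero object. Then for every n ≥ 1, the morphisms X(q_j) : X([1]) → X([n]) for j = 1,…,n (induced by the monotone injections q_j : [1] → [n] with q_j(0) = j−1, q_j(1) = j) and X(p_i) : X([n]) → X([1]) for i = 1,…,n (induced by the monotone surjections p_i : [n] → [1] with p_i⁻¹(0) = {0,…,i−1}) satisfy X(p_i) ∘ X(q_j) = id_{X([1])} if i = j and 0 otherwise, and exhibit X([n]) as a biproduct of n copies of X([1]). -/

import Mathlib

/-!
For `i = j` the composite `q_j ≫ p_i` is already the identity of `⦋1⦌` in `Δ`; for `i ≠ j` it is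
constant, hence factors through `⦋0⦌`, and `X` sends it to `0` because `X(⦋0⦌)` is zero.

The identity `∑ X(p_j) ≫ X(q_j) = 𝟙` follows by induction on `n`. The Segal square for `k = n`
exhibits `X(⦋n+1⦌)` as a pushout of `X(⦋1⦌)` (via `q_{n+1}`) and `X(⦋n⦌)` (via `{0,…,n} ⊆ ⦋n+1⦌`),
so it suffices to test after these two maps. Along `q_{n+1}` this is the orthogonality above. Along
`{0,…,n}`, the maps `p_j` restrict to the `p_j` of `⦋n⦌` for `j ≤ n`, while `p_{n+1}` restricts to a
constant map, so the test reduces to the induction hypothesis.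
-/

open CategoryTheory CategoryTheory.Limits Simplicial

namespace Stmt18

/-- The inclusion `{a, a+1, …, a+m} ⊆ {0,…,n}`, as a map `[m] ⟶ [n]`, `t ↦ a + t`. -/
def interval (a m n : ℕ) (h : a + m ≤ n) : (⦋m⦌ : SimplexCategory) ⟶ ⦋n⦌ :=
  SimplexCategory.mkHom
    { toFun := fun t => ⟨a + t.1, by have := t.isLt; omega⟩
      monotone' := by
        intro s t hst
        have h2 : s.1 ≤ t.1 := hst
        simp only [Fin.mk_le_mk]
        omega }

/-- `q_{j+1} : [1] ⟶ [n]`, the monotone injection with `0 ↦ j`, `1 ↦ j+1` (for `j : Fin n`). -/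
def qF {n : ℕ} (j : Fin n) : (⦋1⦌ : SimplexCategory) ⟶ ⦋n⦌ :=
  interval j.1 1 n (by omega)

/-- `p_{i+1} : [n] ⟶ [1]`, the monotone surjection with `p⁻¹(0) = {0,…,i}` (for `i : Fin n`). -/
def pF {n : ℕ} (i : Fin n) : (⦋n⦌ : SimplexCategory) ⟶ ⦋1⦌ :=
  SimplexCategory.mkHom
    { toFun := fun t => ⟨if t.1 ≤ i.1 then 0 else 1, by split <;> omega⟩
      monotone' := by
        intro s t hst
        have h2 : s.1 ≤ t.1 := hst
        simp only [Fin.mk_le_mk]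
        split <;> split <;> omega }

open SimplexCategory

@[simp] lemma interval_apply (a m n : ℕ) (h : a + m ≤ n) (t) :
    ((interval a m n h).toOrderHom t).val = a + t.val := rfl

@[simp] lemma qF_apply {n : ℕ} (j : Fin n) (t) :
    ((qF j).toOrderHom t).val = j.val + t.val := rfl

@[simp] lemma pF_apply {n : ℕ} (i : Fin n) (t) :
    ((pF i).toOrderHom t).val = if t.val ≤ i.val then 0 else 1 := rfl

lemma qF_comp_pF_self {n : ℕ} (j : Fin n) : qF j ≫ pF j = 𝟙 ⦋1⦌ := by
  ext t : 4
  fin_cases t <;> simp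

lemma qF_comp_pF_of_ne {n : ℕ} {i j : Fin n} (h : i ≠ j) :
    qF j ≫ pF i = const ⦋1⦌ ⦋1⦌ (if j < i then 0 else 1) := by
  have hij : i.val ≠ j.val := Fin.val_ne_of_ne h
  ext t : 4
  simp only [Fin.lt_def]
  fin_cases t <;> simp <;> split_ifs <;> simp <;> omega

lemma qF_castSucc {n : ℕ} (j : Fin n) :
    qF j.castSucc = qF j ≫ interval 0 n (n + 1) (by omega) := by
  ext t : 4
  simp

lemma interval_comp_pF_castSucc {n : ℕ} (j : Fin n) :
    interval 0 n (n + 1) (by omega) ≫ pF j.castSucc = pF j := by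
  ext t : 4
  simp

lemma interval_comp_pF_last (n : ℕ) :
    interval 0 n (n + 1) (by omega) ≫ pF (Fin.last n) = const ⦋n⦌ ⦋1⦌ 0 := by
  ext t : 4
  simp [Nat.lt_succ_iff.mp t.isLt]

lemma pF_zero_comp_qF_zero : pF (0 : Fin 1) ≫ qF 0 = 𝟙 ⦋1⦌ := by
  ext t : 4
  fin_cases t <;> simp

variable {C : Type*} [Category C]

def IsOneSegal (X : SimplexCategory ⥤ C) : Prop :=
  ∀ (n k : ℕ) (_ : 0 < k) (hkn : k < n),
    IsPushout (X.map (interval 0 0 (n - k) (Nat.zero_le _))) (X.map (interval k 0 k le_rfl))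
      (X.map (interval k (n - k) n (Nat.add_sub_of_le hkn.le).le))
      (X.map (interval 0 k n ((Nat.zero_add k).trans_le hkn.le)))

lemma IsOneSegal.isPushout_qF_last {X : SimplexCategory ⥤ C} (hX : IsOneSegal X) {n : ℕ}
    (hn : 0 < n) :
    IsPushout (X.map (interval 0 0 1 (by omega))) (X.map (interval n 0 n (by omega)))
      (X.map (qF (Fin.last n))) (X.map (interval 0 n (n + 1) (by omega))) := by
  -- `⦋n + 1 - n⦌` is not definitionally `⦋1⦌`, so the square is first stated for any `m = 1`.
  have key : ∀ m (_ : m = 1) (h : n + m ≤ n + 1),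
      IsPushout (X.map (interval 0 0 m (by omega))) (X.map (interval n 0 n (by omega)))
        (X.map (interval n m (n + 1) h)) (X.map (interval 0 n (n + 1) (by omega))) →
      IsPushout (X.map (interval 0 0 1 (by omega))) (X.map (interval n 0 n (by omega)))
        (X.map (qF (Fin.last n))) (X.map (interval 0 n (n + 1) (by omega))) := by
    rintro m rfl h hP
    exact hP
  exact key _ (by omega) _ (hX (n + 1) n hn (by omega))

section Preadditive

variable [Preadditive C] {X : SimplexCategory ⥤ C}

lemma map_const_eq_zero (hX0 : IsZero (X.obj ⦋0⦌)) (x y : SimplexCategory) (c : Fin (y.len + 1)) :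
    X.map (const x y c) = 0 := by
  rw [const_fac_thru_zero, X.map_comp, hX0.eq_of_tgt (X.map _) 0, zero_comp]

lemma map_qF_comp_map_pF (hX0 : IsZero (X.obj ⦋0⦌)) {n : ℕ} (i j : Fin n) :
    X.map (qF j) ≫ X.map (pF i) = if i = j then 𝟙 (X.obj ⦋1⦌) else 0 := by
  rw [← X.map_comp]
  split_ifs with h
  · rw [h, qF_comp_pF_self, X.map_id]
  · rw [qF_comp_pF_of_ne h, map_const_eq_zero hX0]

lemma map_qF_comp_sum (hX0 : IsZero (X.obj ⦋0⦌)) {n : ℕ} (k : Fin n) :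
    X.map (qF k) ≫ ∑ j : Fin n, X.map (pF j) ≫ X.map (qF j) = X.map (qF k) := by
  simp [Preadditive.comp_sum, ← Category.assoc, map_qF_comp_map_pF hX0, ite_comp]

lemma map_interval_comp_sum_succ (hX0 : IsZero (X.obj ⦋0⦌)) (n : ℕ) :
    X.map (interval 0 n (n + 1) (by omega)) ≫ ∑ j : Fin (n + 1), X.map (pF j) ≫ X.map (qF j) =
      (∑ j : Fin n, X.map (pF j) ≫ X.map (qF j)) ≫ X.map (interval 0 n (n + 1) (by omega)) := by
  have hlast : X.map (interval 0 n (n + 1) (by omega)) ≫ X.map (pF (Fin.last n)) = 0 := by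
    rw [← X.map_comp, interval_comp_pF_last, map_const_eq_zero hX0]
  have hcastSucc (j : Fin n) : X.map (interval 0 n (n + 1) (by omega)) ≫
      X.map (pF j.castSucc) ≫ X.map (qF j.castSucc) =
      (X.map (pF j) ≫ X.map (qF j)) ≫ X.map (interval 0 n (n + 1) (by omega)) := by
    rw [← Category.assoc, ← X.map_comp, interval_comp_pF_castSucc, qF_castSucc, X.map_comp,
      Category.assoc]
  rw [Preadditive.comp_sum, Fin.sum_univ_castSucc, ← Category.assoc, hlast, zero_comp, add_zero,
    Preadditive.sum_comp]
  exact Finset.sum_congr rfl fun j _ => hcastSucc j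

lemma sum_map_pF_comp_map_qF (hX0 : IsZero (X.obj ⦋0⦌)) (hX : IsOneSegal X) {n : ℕ} (hn : 1 ≤ n) :
    ∑ j : Fin n, X.map (pF j) ≫ X.map (qF j) = 𝟙 (X.obj ⦋n⦌) := by
  induction n, hn using Nat.le_induction with
  | base => rw [Fin.sum_univ_one, ← X.map_comp, pF_zero_comp_qF_zero, X.map_id]
  | succ n hn ih =>
    apply (hX.isPushout_qF_last hn).hom_ext
    · rw [map_qF_comp_sum hX0, Category.comp_id]
    · rw [map_interval_comp_sum_succ hX0, ih, Category.id_comp, Category.comp_id]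

end Preadditive

end Stmt18

open Stmt18 in
theorem stmt_18 {C : Type*} [Category C] [Preadditive C]
    (X : SimplexCategory ⥤ C)
    -- X is 1-Segal:
    (h1Segal : ∀ (n k : ℕ) (_ : 0 < k) (_ : k < n),
      IsPushout
        (X.map (interval 0 0 (n - k) (by omega)))       -- {k} ↪ {k,…,n}
        (X.map (interval k 0 k (by omega)))             -- {k} ↪ {0,…,k}
        (X.map (interval k (n - k) n (by omega)))       -- {k,…,n} ↪ {0,…,n}
        (X.map (interval 0 k n (by omega))))            -- {0,…,k} ↪ {0,…,n}
    -- X([0]) is a zero object: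
    (hX0 : IsZero (X.obj ⦋0⦌)) :
    ∀ (n : ℕ) (_ : 1 ≤ n),
      -- `X(p_i) ∘ X(q_j) = id` if `i = j` and `0` otherwise:
      (∀ i j : Fin n,
        X.map (qF j) ≫ X.map (pF i) =
          if i = j then 𝟙 (X.obj ⦋1⦌) else 0) ∧
      -- and the `X(q_j)`, `X(p_i)` exhibit `X([n])` as a biproduct of `n` copies of `X([1])`:
      (∑ j : Fin n, X.map (pF j) ≫ X.map (qF j)) = 𝟙 (X.obj ⦋n⦌) := by
  intro n hn
  exact ⟨map_qF_comp_map_pF hX0, sum_map_pF_comp_map_qF hX0 h1Segal hn⟩
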